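/- The only pairs (u,v) with u,v ≥ 2 and (k,ℓ) with k ≥ 2, ℓ ≥ 1 for which U(A_{u,v}) = U(B_{k,ℓ}^γ) as multisets (with U(A_{u,v}) = 2v[u−2] + 2u[v−2] and U(B_{k,ℓ}^γ) = 2ℓ[2k−2], omitting zero-order entries) are: (u,v) = (2k,2k) with ℓ = 4k, and (u,v) = (2k,2) (up to swapping u,v) with ℓ = 2. -/
import Mathlib


open Multiset

/-- Umbilic structure of `A_{u,v}`: `2v` copies of `u-2` and `2u` copies of `v-2`,
with zero-order entries omitted. -/
def uStructA (u v : ℕ) : Multiset ℕ :=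
  (Multiset.replicate (2 * v) (u - 2) + Multiset.replicate (2 * u) (v - 2)).filter (· ≠ 0)

/-- Umbilic structure of `B_{k,ℓ}^γ`: `2ℓ` copies of `2k-2`, zero-order entries omitted. -/
def uStructBGamma (k l : ℕ) : Multiset ℕ :=
  (Multiset.replicate (2 * l) (2 * k - 2)).filter (· ≠ 0)

set_option maxHeartbeats 2000000 in
/-- The umbilic structures of `A_{u,v}` and `B_{k,ℓ}^γ` coincide exactly for
`(u,v) = (2k,2k)` with `ℓ = 4k`, and `(u,v) = (2k,2)` (up to swap) with `ℓ = 2`. -/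
theorem umbilic_structure_coincidences (u v k l : ℕ)
    (hu : 2 ≤ u) (hv : 2 ≤ v) (hk : 2 ≤ k) (hl : 1 ≤ l) :
    uStructA u v = uStructBGamma k l ↔
      (u = 2 * k ∧ v = 2 * k ∧ l = 4 * k) ∨
      ((u = 2 * k ∧ v = 2 ∨ u = 2 ∧ v = 2 * k) ∧ l = 2) := by
  constructor
  · intro h
    have hc : ∀ n : ℕ, Multiset.count n (uStructA u v) =
        Multiset.count n (uStructBGamma k l) := fun n => by rw [h]
    simp only [uStructA, uStructBGamma, Multiset.count_filter, Multiset.count_add,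
      Multiset.count_replicate] at hc
    have hk2 : ¬ (2 * k - 2 = 0) := by omega
    have h1 := hc (2 * k - 2)
    have h2 := hc (u - 2)
    have h3 := hc (v - 2)
    simp only [ne_eq, hk2, not_false_eq_true, if_true, if_pos rfl] at h1
    by_cases ha : u = 2 <;> by_cases hb : v = 2 <;>
      simp only [ha, hb] at h1 h2 h3 <;>
      split_ifs at h1 h2 h3 <;> omega
  · intro h
    ext n
    simp only [uStructA, uStructBGamma, Multiset.count_filter, Multiset.count_add,
      Multiset.count_replicate]
    rcases h with ⟨h1, h2, h3⟩ | ⟨h1 | h1, h2⟩ <;>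
      [skip; obtain ⟨ha, hb⟩ := h1; obtain ⟨ha, hb⟩ := h1] <;>
      split_ifs <;> omega
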